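/- arXiv:1603.03372 — 6 statements merged into one kernel-verified Lean document; each statement's English description precedes it below -/
import Mathlib

section
/- Let n ≥ 1 and let X, X_d : ℝ → SO(n) be differentiable with Ẋ = XU and Ẋ_d = U_d X_d, where U(t), U_d(t) ∈ so(n) are continuous. Let X_r ∈ SO(n) be constant, let y_1^r, …, y_ν^r ∈ ℝⁿ be constant vectors, and set E_r(t) = X(t)ᵀ X_d(t) X_rᵀ and e_i(t) = y_i^r − E_r(t) y_i^r. Then for any continuous Δ : ℝ → so(n), writing Δ̃ = U_d − Δ, one has for all t: d/dt [ (1/2) Σ_{i=1}^{ν} ‖e_i(t)‖² ] = Σ_{i=1}^{ν} tr( (U − XᵀΔX)ᵀ P( e_i (y_i^r − e_i)ᵀ ) ) − Σ_{i=1}^{ν} tr( Δ̃ᵀ P( X e_i (y_i^r − e_i)ᵀ Xᵀ ) ). -/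
open Matrix

attribute [local instance] Matrix.frobeniusNormedAddCommGroup Matrix.frobeniusNormedSpace

noncomputable section

/-- The special orthogonal group `SO(n)` as a set of real `n × n` matrices. -/
def SOn (n : ℕ) : Set (Matrix (Fin n) (Fin n) ℝ) := {R | Rᵀ * R = 1 ∧ R.det = 1}

/-- Orthogonal projection of a square matrix onto the skew-symmetric matrices
(the Lie algebra `so(n)`) with respect to the trace inner product. -/
def skewProj {n : ℕ} (A : Matrix (Fin n) (Fin n) ℝ) : Matrix (Fin n) (Fin n) ℝ :=
  (1 / 2 : ℝ) • (A - Aᵀ)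

/-! Along the flows, `Ė_r = (Xᵀ U_d X - U) E_r`, so `ė_i = (U - Xᵀ U_d X)(y_i^r - e_i)` and the
Lyapunov function has derivative `Σ e_i ⬝ (U - Xᵀ U_d X)(y_i^r - e_i)`. On the other side, a skew
matrix pairs with `P(A)` as with `A`, `tr(Bᵀ v wᵀ) = v ⬝ B w`, and conjugating the second trace by
`X` brings it to the same form; the `XᵀΔX` contributions of the two sums then cancel. -/

attribute [local instance] Matrix.frobeniusNormedRing Matrix.frobeniusNormedAlgebra

section Calculus

variable {m n ι : Type*} [Fintype m] [Fintype n] [Fintype ι] {t : ℝ}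

theorem HasDerivAt.matrix_transpose {M : ℝ → Matrix m n ℝ} {M' : Matrix m n ℝ}
    (hM : HasDerivAt M M' t) : HasDerivAt (fun s => (M s)ᵀ) M'ᵀ t :=
  (transposeLinearEquiv m n ℝ ℝ).toLinearMap.toContinuousLinearMap.hasFDerivAt.comp_hasDerivAt
    t hM

theorem HasDerivAt.matrix_mulVec_const {M : ℝ → Matrix m n ℝ} {M' : Matrix m n ℝ}
    (hM : HasDerivAt M M' t) (v : n → ℝ) : HasDerivAt (fun s => M s *ᵥ v) (M' *ᵥ v) t :=
  ((mulVecBilin ℝ ℝ).flip v).toContinuousLinearMap.hasFDerivAt.comp_hasDerivAt (f := M) t hM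

theorem HasDerivAt.dotProduct {f g : ℝ → ι → ℝ} {f' g' : ι → ℝ}
    (hf : HasDerivAt f f' t) (hg : HasDerivAt g g' t) :
    HasDerivAt (fun s => f s ⬝ᵥ g s) (f' ⬝ᵥ g t + f t ⬝ᵥ g') t := by
  have := HasDerivAt.fun_sum (u := Finset.univ) fun k _ =>
    (hasDerivAt_pi.1 hf k).fun_mul (hasDerivAt_pi.1 hg k)
  rwa [Finset.sum_add_distrib] at this

theorem HasDerivAt.half_sum_dotProduct_self {κ : Type*} [Fintype κ] {f : κ → ℝ → ι → ℝ}
    {f' : κ → ι → ℝ} (hf : ∀ i, HasDerivAt (f i) (f' i) t) :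
    HasDerivAt (fun s => (1 / 2 : ℝ) * ∑ i, f i s ⬝ᵥ f i s) (∑ i, f i t ⬝ᵥ f' i) t := by
  refine ((HasDerivAt.fun_sum (u := Finset.univ) fun i _ =>
    (hf i).dotProduct (hf i)).const_mul (1 / 2 : ℝ)).congr_deriv ?_
  rw [Finset.mul_sum]
  refine Finset.sum_congr rfl fun i _ => ?_
  rw [dotProduct_comm (f' i)]
  ring

end Calculus

section Trace

variable {n : Type*} [Fintype n]

theorem Matrix.trace_transpose_mul_vecMulVec {R : Type*} [CommSemiring R] (A : Matrix n n R)
    (v w : n → R) : trace (Aᵀ * vecMulVec v w) = v ⬝ᵥ (A *ᵥ w) := by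
  rw [mul_vecMulVec, trace_vecMulVec, mulVec_transpose, dotProduct_mulVec]

theorem Matrix.trace_transpose_mul_conj {R : Type*} [CommSemiring R] (B X M : Matrix n n R) :
    trace (Bᵀ * (X * M * Xᵀ)) = trace ((Xᵀ * B * X)ᵀ * M) := by
  rw [transpose_mul, transpose_mul, transpose_transpose, ← Matrix.mul_assoc,
    trace_mul_comm]
  simp only [Matrix.mul_assoc]

theorem Matrix.transpose_conj_eq_neg {R : Type*} [CommRing R] {S : Matrix n n R}
    (hS : Sᵀ = -S) (X : Matrix n n R) : (Xᵀ * S * X)ᵀ = -(Xᵀ * S * X) := by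
  rw [transpose_mul, transpose_mul, transpose_transpose, hS, Matrix.neg_mul, Matrix.mul_neg,
    Matrix.mul_assoc]

end Trace

theorem trace_transpose_mul_skewProj {n : ℕ} {S : Matrix (Fin n) (Fin n) ℝ} (hS : Sᵀ = -S)
    (A : Matrix (Fin n) (Fin n) ℝ) : trace (Sᵀ * skewProj A) = trace (Sᵀ * A) := by
  have hAt : trace (Sᵀ * Aᵀ) = -trace (Sᵀ * A) := by
    rw [← transpose_mul, trace_transpose, trace_mul_comm A S, hS, Matrix.neg_mul, trace_neg,
      neg_neg]
  rw [skewProj, Matrix.mul_smul, trace_smul, Matrix.mul_sub, trace_sub, hAt, smul_eq_mul]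
  ring

theorem trace_sub_trace_skewProj_conj_eq_dotProduct {n : ℕ}
    {U V Δ : Matrix (Fin n) (Fin n) ℝ} (hU : Uᵀ = -U) (hV : Vᵀ = -V) (hΔ : Δᵀ = -Δ)
    (X : Matrix (Fin n) (Fin n) ℝ) (v w : Fin n → ℝ) :
    trace ((U - Xᵀ * Δ * X)ᵀ * skewProj (vecMulVec v w)) -
        trace ((V - Δ)ᵀ * skewProj (X * vecMulVec v w * Xᵀ)) =
      v ⬝ᵥ ((U - Xᵀ * V * X) *ᵥ w) := by
  have hUΔ : (U - Xᵀ * Δ * X)ᵀ = -(U - Xᵀ * Δ * X) := by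
    rw [transpose_sub, hU, transpose_conj_eq_neg hΔ, neg_sub, neg_sub_neg]
  have hVΔ : (V - Δ)ᵀ = -(V - Δ) := by rw [transpose_sub, hV, hΔ, neg_sub, neg_sub_neg]
  rw [trace_transpose_mul_skewProj hUΔ, trace_transpose_mul_skewProj hVΔ,
    trace_transpose_mul_conj, trace_transpose_mul_vecMulVec, trace_transpose_mul_vecMulVec,
    ← dotProduct_sub, ← sub_mulVec]
  congr 2
  noncomm_ring

theorem hasDerivAt_transpose_mul_mul_const {n : Type*} [Fintype n] [DecidableEq n]
    {X Y : ℝ → Matrix n n ℝ} {U V : Matrix n n ℝ} {t : ℝ}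
    (hX : HasDerivAt X (X t * U) t) (hY : HasDerivAt Y (V * Y t) t)
    (hXXt : X t * (X t)ᵀ = 1) (hU : Uᵀ = -U) (C : Matrix n n ℝ) :
    HasDerivAt (fun s => (X s)ᵀ * Y s * C) (((X t)ᵀ * V * X t - U) * ((X t)ᵀ * Y t * C)) t := by
  refine ((hX.matrix_transpose.mul hY).mul_const C).congr_deriv ?_
  calc ((X t * U)ᵀ * Y t + (X t)ᵀ * (V * Y t)) * C
      = ((X t)ᵀ * V * (X t * (X t)ᵀ) - U * (X t)ᵀ) * Y t * C := by
        rw [transpose_mul, hU, hXXt]; noncomm_ring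
    _ = ((X t)ᵀ * V * X t - U) * ((X t)ᵀ * Y t * C) := by noncomm_ring

theorem lyapunov_derivative_SOn_general
    (n ν : ℕ)
    (X Xd : ℝ → Matrix (Fin n) (Fin n) ℝ)
    (U Ud Δ : ℝ → Matrix (Fin n) (Fin n) ℝ)
    (Xr : Matrix (Fin n) (Fin n) ℝ)
    (yr : Fin ν → Fin n → ℝ)
    (hX : ∀ t, X t ∈ SOn n)
    (hUskew : ∀ t, (U t)ᵀ = -(U t))
    (hUdskew : ∀ t, (Ud t)ᵀ = -(Ud t))
    (hΔskew : ∀ t, (Δ t)ᵀ = -(Δ t))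
    (hXdot : ∀ t, HasDerivAt X (X t * U t) t)
    (hXddot : ∀ t, HasDerivAt Xd (Ud t * Xd t) t)
    -- the group error and the output errors
    (Er : ℝ → Matrix (Fin n) (Fin n) ℝ)
    (hEr : ∀ t, Er t = (X t)ᵀ * Xd t * Xrᵀ)
    (e : Fin ν → ℝ → Fin n → ℝ)
    (he : ∀ i t, e i t = yr i - (Er t) *ᵥ yr i) :
    ∀ t, HasDerivAt (fun s => (1 / 2 : ℝ) * ∑ i, (e i s) ⬝ᵥ (e i s))
      ((∑ i, trace ((U t - (X t)ᵀ * Δ t * X t)ᵀ *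
            skewProj (vecMulVec (e i t) (yr i - e i t)))) -
       (∑ i, trace ((Ud t - Δ t)ᵀ *
            skewProj (X t * vecMulVec (e i t) (yr i - e i t) * (X t)ᵀ)))) t := by
  intro t
  have hErdot : HasDerivAt Er (((X t)ᵀ * Ud t * X t - U t) * Er t) t := by
    rw [hEr t, funext hEr]
    exact hasDerivAt_transpose_mul_mul_const (hXdot t) (hXddot t)
      (mul_eq_one_comm.mp (hX t).1) (hUskew t) Xrᵀ
  have hedot (i : Fin ν) :
      HasDerivAt (e i) ((U t - (X t)ᵀ * Ud t * X t) *ᵥ (yr i - e i t)) t := by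
    rw [show yr i - e i t = Er t *ᵥ yr i by rw [he]; abel, funext (he i)]
    refine ((hasDerivAt_const t (yr i)).sub (hErdot.matrix_mulVec_const (yr i))).congr_deriv ?_
    rw [zero_sub, mulVec_mulVec, ← neg_mulVec, ← Matrix.neg_mul, neg_sub]
  refine (HasDerivAt.half_sum_dotProduct_self hedot).congr_deriv ?_
  rw [← Finset.sum_sub_distrib]
  exact Finset.sum_congr rfl fun i _ => (trace_sub_trace_skewProj_conj_eq_dotProduct
    (hUskew t) (hUdskew t) (hΔskew t) (X t) (e i t) (yr i - e i t)).symm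

/-- **Lyapunov derivative identity on `SO(n)`.**
With `Ẋ = XU`, `Ẋd = Ud Xd` evolving on `SO(n)`, `E_r = Xᵀ Xd Xrᵀ`,
`e_i = y_i^r − E_r y_i^r` and any skew-valued `Δ`, with `Δ̃ = Ud − Δ`:
`d/dt (½ Σ‖e_i‖²) = Σ tr((U − XᵀΔX)ᵀ P(e_i (y_i^r − e_i)ᵀ)) − Σ tr(Δ̃ᵀ P(X e_i (y_i^r − e_i)ᵀ Xᵀ))`. -/
theorem lyapunov_derivative_SOn
    (n ν : ℕ) (hn : 1 ≤ n)
    (X Xd : ℝ → Matrix (Fin n) (Fin n) ℝ)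
    (U Ud Δ : ℝ → Matrix (Fin n) (Fin n) ℝ)
    (Xr : Matrix (Fin n) (Fin n) ℝ)
    (yr : Fin ν → Fin n → ℝ)
    (hX : ∀ t, X t ∈ SOn n) (hXd : ∀ t, Xd t ∈ SOn n) (hXr : Xr ∈ SOn n)
    (hUskew : ∀ t, (U t)ᵀ = -(U t))
    (hUdskew : ∀ t, (Ud t)ᵀ = -(Ud t))
    (hΔskew : ∀ t, (Δ t)ᵀ = -(Δ t))
    (hUcont : Continuous U) (hUdcont : Continuous Ud) (hΔcont : Continuous Δ)
    (hXdot : ∀ t, HasDerivAt X (X t * U t) t)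
    (hXddot : ∀ t, HasDerivAt Xd (Ud t * Xd t) t)
    -- the group error and the output errors
    (Er : ℝ → Matrix (Fin n) (Fin n) ℝ)
    (hEr : ∀ t, Er t = (X t)ᵀ * Xd t * Xrᵀ)
    (e : Fin ν → ℝ → Fin n → ℝ)
    (he : ∀ i t, e i t = yr i - (Er t) *ᵥ yr i) :
    ∀ t, HasDerivAt (fun s => (1 / 2 : ℝ) * ∑ i, (e i s) ⬝ᵥ (e i s))
      ((∑ i, trace ((U t - (X t)ᵀ * Δ t * X t)ᵀ *
            skewProj (vecMulVec (e i t) (yr i - e i t)))) -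
       (∑ i, trace ((Ud t - Δ t)ᵀ *
            skewProj (X t * vecMulVec (e i t) (yr i - e i t) * (X t)ᵀ)))) t :=
  lyapunov_derivative_SOn_general n ν X Xd U Ud Δ Xr yr hX hUskew hUdskew hΔskew hXdot hXddot Er hEr
    e he
end
end

section
/- Let A ∈ M₃(ℝ), let y_1, …, y_ν ∈ ℝ³, and set Y = Σ_{i=1}^{ν} y_i y_iᵀ. Then Σ_{i=1}^{ν} ( (A y_i) × y_i )_× = Y Aᵀ − A Y. In particular, Σ_{i=1}^{ν} (A y_i) × y_i = 0 if and only if A Y = Y Aᵀ. -/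
open Matrix

noncomputable section

def skew3 (v : Fin 3 → ℝ) : Matrix (Fin 3) (Fin 3) ℝ :=
  !![0, -v 2, v 1; v 2, 0, -v 0; -v 1, v 0, 0]

def cross3 (a b : Fin 3 → ℝ) : Fin 3 → ℝ :=
  ![a 1 * b 2 - a 2 * b 1, a 2 * b 0 - a 0 * b 2, a 0 * b 1 - a 1 * b 0]

lemma skew3_add (a b : Fin 3 → ℝ) : skew3 (a + b) = skew3 a + skew3 b := by
  ext i j
  fin_cases i <;> fin_cases j <;> simp [skew3] <;> ring

lemma skew3_sum {ι : Type*} (s : Finset ι) (v : ι → Fin 3 → ℝ) :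
    skew3 (∑ i ∈ s, v i) = ∑ i ∈ s, skew3 (v i) :=
  map_sum (AddMonoidHom.mk' skew3 skew3_add) v s

lemma skew3_eq_zero_iff {v : Fin 3 → ℝ} : skew3 v = 0 ↔ v = 0 := by
  refine ⟨fun h => ?_, fun h => ?_⟩
  · ext i
    fin_cases i
    · simpa [skew3] using congrFun (congrFun h 2) 1
    · simpa [skew3] using congrFun (congrFun h 0) 2
    · simpa [skew3] using congrFun (congrFun h 1) 0
  · subst h
    ext i j
    fin_cases i <;> fin_cases j <;> simp [skew3]

lemma skew3_cross3 (a b : Fin 3 → ℝ) :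
    skew3 (cross3 a b) = vecMulVec b a - vecMulVec a b := by
  ext i j
  fin_cases i <;> fin_cases j <;> simp [skew3, cross3, vecMulVec] <;> ring

lemma skew3_cross3_mulVec_self (A : Matrix (Fin 3) (Fin 3) ℝ) (v : Fin 3 → ℝ) :
    skew3 (cross3 (A *ᵥ v) v) = vecMulVec v v * Aᵀ - A * vecMulVec v v := by
  rw [skew3_cross3, vecMulVec_mul, vecMul_transpose, mul_vecMulVec]

/-- **Equilibrium characterization identity.**
For `A ∈ M₃(ℝ)` and `Y = Σ yᵢ yᵢᵀ`:
`Σᵢ ((A yᵢ) × yᵢ)_× = Y Aᵀ − A Y`, and hence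
`Σᵢ (A yᵢ) × yᵢ = 0 ↔ A Y = Y Aᵀ`. -/
theorem sum_cross_skew_eq_YAt_sub_AY
    (ν : ℕ) (A : Matrix (Fin 3) (Fin 3) ℝ)
    (y : Fin ν → Fin 3 → ℝ)
    (Y : Matrix (Fin 3) (Fin 3) ℝ)
    (hY : Y = ∑ i, vecMulVec (y i) (y i)) :
    (∑ i, skew3 (cross3 (A *ᵥ y i) (y i)) = Y * Aᵀ - A * Y) ∧
    ((∑ i, cross3 (A *ᵥ y i) (y i)) = 0 ↔ A * Y = Y * Aᵀ) := by
  have hskew : ∑ i, skew3 (cross3 (A *ᵥ y i) (y i)) = Y * Aᵀ - A * Y := by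
    simp_rw [skew3_cross3_mulVec_self, hY, Finset.sum_sub_distrib, Finset.sum_mul,
      Finset.mul_sum]
  refine ⟨hskew, ?_⟩
  rw [← skew3_eq_zero_iff, skew3_sum, hskew, sub_eq_zero, eq_comm]
end
end

section
/- Let Y be a real symmetric 3×3 matrix with eigenvalues λ₁ < λ₂ < λ₃ and corresponding orthonormal eigenvectors u₁, u₂, u₃. Define R₂ = u₁u₁ᵀ − u₂u₂ᵀ − u₃u₃ᵀ, R₃ = −u₁u₁ᵀ + u₂u₂ᵀ − u₃u₃ᵀ, R₄ = −u₁u₁ᵀ − u₂u₂ᵀ + u₃u₃ᵀ, and for j = 2, 3, 4 set Υ_j = Y R_j − tr(Y R_j) I₃. Then Υ₂ has eigenvalues λ₂+λ₃, λ₃−λ₁, λ₂−λ₁; Υ₃ has eigenvalues λ₃−λ₂, λ₃+λ₁, λ₁−λ₂; and Υ₄ has eigenvalues λ₂−λ₃, λ₁−λ₃, λ₁+λ₂. -/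
/-!
Let `Q` be the orthogonal matrix whose columns are the eigenvectors `uᵢ`. Then `Y Q = Q Λ` and each
`Rⱼ = Q Eⱼ Qᵀ` with `Eⱼ` a diagonal sign matrix, so `Υⱼ = Q (Λ Eⱼ - tr(Λ Eⱼ) I) Qᵀ` is orthogonally
similar to a diagonal matrix: its eigenvalues are `λᵢ εᵢ - ∑ₖ λₖ εₖ`.
-/

open Matrix

namespace Matrix

variable {n : Type*} [Fintype n] [DecidableEq n]

theorem of_mul_transpose_of_eq_one {u : n → n → ℝ}
    (horth : ∀ i j, u i ⬝ᵥ u j = if i = j then 1 else 0) : of u * (of u)ᵀ = 1 := by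
  ext i j
  simpa [mul_apply, one_apply, dotProduct] using horth i j

theorem mul_transpose_of_eq_of_mulVec_eq {Y : Matrix n n ℝ} {lam : n → ℝ} {u : n → n → ℝ}
    (heig : ∀ i, Y *ᵥ u i = lam i • u i) : Y * (of u)ᵀ = (of u)ᵀ * diagonal lam := by
  ext i j
  simpa [mul_apply, mulVec, dotProduct, diagonal, mul_comm] using congrFun (heig j) i

theorem transpose_of_mul_diagonal_mul_of (u : n → n → ℝ) (d : n → ℝ) :
    (of u)ᵀ * diagonal d * of u = ∑ k, d k • vecMulVec (u k) (u k) := by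
  ext i j
  simp [mul_apply, diagonal, vecMulVec_apply, Matrix.sum_apply, mul_comm, mul_left_comm]

section Conj

variable {Q : Matrix n n ℝ}

theorem mul_conj_diagonal {Y : Matrix n n ℝ} {lam : n → ℝ} (hYQ : Y * Q = Q * diagonal lam)
    (d : n → ℝ) : Y * (Q * diagonal d * Qᵀ) = Q * diagonal (lam * d) * Qᵀ := by
  rw [← Matrix.mul_assoc, ← Matrix.mul_assoc, hYQ, Matrix.mul_assoc Q, diagonal_mul_diagonal]
  rfl

theorem trace_conj_diagonal (hQ : Qᵀ * Q = 1) (e : n → ℝ) :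
    (Q * diagonal e * Qᵀ).trace = ∑ i, e i := by
  rw [trace_mul_cycle, hQ, Matrix.one_mul, trace_diagonal]

theorem det_conj_diagonal_sub_smul_one (hQ : Qᵀ * Q = 1) (e : n → ℝ) (c : ℝ) :
    (Q * diagonal e * Qᵀ - c • 1).det = ∏ i, (e i - c) := by
  have hconj : Q * diagonal e * Qᵀ - c • 1 = Q * diagonal (fun i => e i - c) * Qᵀ := by
    have hdiag : diagonal (fun i => e i - c) = diagonal e - c • 1 := by
      rw [smul_one_eq_diagonal, diagonal_sub]
    rw [hdiag, Matrix.mul_sub, Matrix.sub_mul, Matrix.mul_smul, Matrix.smul_mul, Matrix.mul_one,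
      mul_eq_one_comm.mp hQ]
  have hdet : Q.det * Qᵀ.det = 1 := by rw [mul_comm, ← det_mul, hQ, det_one]
  rw [hconj, det_mul, det_mul, det_diagonal, mul_right_comm, hdet, one_mul]

end Conj

theorem det_mul_sub_trace_smul_sub_smul_of_eigenbasis {Y R : Matrix n n ℝ} {lam : n → ℝ}
    {u : n → n → ℝ} (heig : ∀ i, Y *ᵥ u i = lam i • u i)
    (horth : ∀ i j, u i ⬝ᵥ u j = if i = j then 1 else 0) {ε : n → ℝ}
    (hR : R = ∑ k, ε k • vecMulVec (u k) (u k)) (x : ℝ) :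
    (Y * R - (Y * R).trace • 1 - x • 1).det = ∏ i, (lam i * ε i - ∑ j, lam j * ε j - x) := by
  have hQ : (of u)ᵀᵀ * (of u)ᵀ = 1 := by rw [transpose_transpose, of_mul_transpose_of_eq_one horth]
  have hRQ : R = (of u)ᵀ * diagonal ε * (of u)ᵀᵀ := by
    rw [hR, transpose_transpose, transpose_of_mul_diagonal_mul_of]
  rw [hRQ, mul_conj_diagonal (mul_transpose_of_eq_of_mulVec_eq heig), trace_conj_diagonal hQ,
    sub_sub, ← add_smul, det_conj_diagonal_sub_smul_one hQ]
  simp only [Pi.mul_apply, sub_sub]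

end Matrix

theorem upsilon_eigenvalues_general
    (Y : Matrix (Fin 3) (Fin 3) ℝ)
    (lam : Fin 3 → ℝ) (u : Fin 3 → Fin 3 → ℝ)
    (heig : ∀ i, Y *ᵥ u i = lam i • u i)
    (horth : ∀ i j, u i ⬝ᵥ u j = if i = j then 1 else 0)
    (R2 R3 R4 U2 U3 U4 : Matrix (Fin 3) (Fin 3) ℝ)
    (hR2 : R2 = vecMulVec (u 0) (u 0) - vecMulVec (u 1) (u 1) - vecMulVec (u 2) (u 2))
    (hR3 : R3 = -vecMulVec (u 0) (u 0) + vecMulVec (u 1) (u 1) - vecMulVec (u 2) (u 2))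
    (hR4 : R4 = -vecMulVec (u 0) (u 0) - vecMulVec (u 1) (u 1) + vecMulVec (u 2) (u 2))
    (hU2 : U2 = Y * R2 - (Y * R2).trace • (1 : Matrix (Fin 3) (Fin 3) ℝ))
    (hU3 : U3 = Y * R3 - (Y * R3).trace • (1 : Matrix (Fin 3) (Fin 3) ℝ))
    (hU4 : U4 = Y * R4 - (Y * R4).trace • (1 : Matrix (Fin 3) (Fin 3) ℝ)) :
    (∀ x : ℝ, (U2 - x • (1 : Matrix (Fin 3) (Fin 3) ℝ)).det =
      -((x - (lam 1 + lam 2)) * (x - (lam 2 - lam 0)) * (x - (lam 1 - lam 0)))) ∧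
    (∀ x : ℝ, (U3 - x • (1 : Matrix (Fin 3) (Fin 3) ℝ)).det =
      -((x - (lam 2 - lam 1)) * (x - (lam 2 + lam 0)) * (x - (lam 0 - lam 1)))) ∧
    (∀ x : ℝ, (U4 - x • (1 : Matrix (Fin 3) (Fin 3) ℝ)).det =
      -((x - (lam 1 - lam 2)) * (x - (lam 0 - lam 2)) * (x - (lam 0 + lam 1)))) := by
  have hdet (ε : Fin 3 → ℝ) (R : Matrix (Fin 3) (Fin 3) ℝ)
      (hR : R = ∑ k, ε k • vecMulVec (u k) (u k)) (x : ℝ) :=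
    det_mul_sub_trace_smul_sub_smul_of_eigenbasis heig horth hR x
  refine ⟨fun x => ?_, fun x => ?_, fun x => ?_⟩
  · rw [hU2, hdet ![1, -1, -1] R2 (by simp [hR2, Fin.sum_univ_three, sub_eq_add_neg]) x]
    simp only [Fin.prod_univ_three, Fin.sum_univ_three, cons_val_zero, cons_val_one, cons_val]
    ring
  · rw [hU3, hdet ![-1, 1, -1] R3 (by simp [hR3, Fin.sum_univ_three, sub_eq_add_neg]) x]
    simp only [Fin.prod_univ_three, Fin.sum_univ_three, cons_val_zero, cons_val_one, cons_val]
    ring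
  · rw [hU4, hdet ![-1, -1, 1] R4 (by simp [hR4, Fin.sum_univ_three, sub_eq_add_neg]) x]
    simp only [Fin.prod_univ_three, Fin.sum_univ_three, cons_val_zero, cons_val_one, cons_val]
    ring

/-- **Eigenvalues of the linearization matrices `Υⱼ`.**
With `Y` symmetric with eigenvalues `λ₁ < λ₂ < λ₃`, orthonormal eigenvectors
`u₁, u₂, u₃`, `Rⱼ` the three non-identity symmetric equilibria and
`Υⱼ = Y Rⱼ − tr(Y Rⱼ) I₃`, the characteristic polynomials factor as stated:
`Υ₂` has eigenvalues `λ₂+λ₃, λ₃−λ₁, λ₂−λ₁`, `Υ₃` has `λ₃−λ₂, λ₃+λ₁, λ₁−λ₂`,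
and `Υ₄` has `λ₂−λ₃, λ₁−λ₃, λ₁+λ₂` (counted with multiplicity). -/
theorem upsilon_eigenvalues
    (Y : Matrix (Fin 3) (Fin 3) ℝ) (hYsymm : Yᵀ = Y)
    (lam : Fin 3 → ℝ) (u : Fin 3 → Fin 3 → ℝ)
    (heig : ∀ i, Y *ᵥ u i = lam i • u i)
    (horth : ∀ i j, u i ⬝ᵥ u j = if i = j then 1 else 0)
    (hlt01 : lam 0 < lam 1) (hlt12 : lam 1 < lam 2)
    (R2 R3 R4 U2 U3 U4 : Matrix (Fin 3) (Fin 3) ℝ)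
    (hR2 : R2 = vecMulVec (u 0) (u 0) - vecMulVec (u 1) (u 1) - vecMulVec (u 2) (u 2))
    (hR3 : R3 = -vecMulVec (u 0) (u 0) + vecMulVec (u 1) (u 1) - vecMulVec (u 2) (u 2))
    (hR4 : R4 = -vecMulVec (u 0) (u 0) - vecMulVec (u 1) (u 1) + vecMulVec (u 2) (u 2))
    (hU2 : U2 = Y * R2 - (Y * R2).trace • (1 : Matrix (Fin 3) (Fin 3) ℝ))
    (hU3 : U3 = Y * R3 - (Y * R3).trace • (1 : Matrix (Fin 3) (Fin 3) ℝ))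
    (hU4 : U4 = Y * R4 - (Y * R4).trace • (1 : Matrix (Fin 3) (Fin 3) ℝ)) :
    (∀ x : ℝ, (U2 - x • (1 : Matrix (Fin 3) (Fin 3) ℝ)).det =
      -((x - (lam 1 + lam 2)) * (x - (lam 2 - lam 0)) * (x - (lam 1 - lam 0)))) ∧
    (∀ x : ℝ, (U3 - x • (1 : Matrix (Fin 3) (Fin 3) ℝ)).det =
      -((x - (lam 2 - lam 1)) * (x - (lam 2 + lam 0)) * (x - (lam 0 - lam 1)))) ∧
    (∀ x : ℝ, (U4 - x • (1 : Matrix (Fin 3) (Fin 3) ℝ)).det =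
      -((x - (lam 1 - lam 2)) * (x - (lam 0 - lam 2)) * (x - (lam 0 + lam 1)))) :=
  upsilon_eigenvalues_general Y lam u heig horth R2 R3 R4 U2 U3 U4 hR2 hR3 hR4 hU2 hU3 hU4
end

section
/- Let Y be a real symmetric positive semidefinite 3×3 matrix with eigenvalues 0 ≤ λ₁ < λ₂ < λ₃ and corresponding orthonormal eigenvectors u₁, u₂, u₃. Define R₂ = u₁u₁ᵀ − u₂u₂ᵀ − u₃u₃ᵀ, R₃ = −u₁u₁ᵀ + u₂u₂ᵀ − u₃u₃ᵀ, R₄ = −u₁u₁ᵀ − u₂u₂ᵀ + u₃u₃ᵀ, and for j = 2, 3, 4 set Υ_j = Y R_j − tr(Y R_j) I₃. Then each Υ_j (j = 2, 3, 4) is invertible and has at least one strictly positive eigenvalue. -/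
/-!
In the orthonormal eigenbasis `u`, both `Y = ∑ λᵢ uᵢuᵢᵀ` and each `Rⱼ = ∑ sᵢ uᵢuᵢᵀ` (signs `sᵢ`)
are diagonal, hence so is `Υⱼ = ∑ (λᵢ sᵢ - ∑ₗ λₗ sₗ) uᵢuᵢᵀ`. For `R₂` these coefficients are
`λ₂ + λ₃`, `λ₃ - λ₁`, `λ₂ - λ₁`, and similarly for `R₃`, `R₄`: they are nonzero because the
eigenvalues are distinct and nonnegative, and the one at the `+1` sign is the sum of the two
other eigenvalues, hence a positive eigenvalue of `Υⱼ`.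
-/

open Matrix

namespace Matrix

variable {n R : Type*} [Fintype n]

def spectralSum [CommRing R] (u : n → n → R) (c : n → R) : Matrix n n R :=
  ∑ i, c i • vecMulVec (u i) (u i)

section CommRing

variable [CommRing R] {u : n → n → R}

theorem spectralSum_fin_three (u : Fin 3 → Fin 3 → R) (a b c : R) :
    spectralSum u ![a, b, c] = a • vecMulVec (u 0) (u 0) + b • vecMulVec (u 1) (u 1)
      + c • vecMulVec (u 2) (u 2) :=
  Fin.sum_univ_three _

theorem mul_spectralSum_of_mulVec_eq {Y : Matrix n n R} {lam : n → R}
    (heig : ∀ i, Y *ᵥ u i = lam i • u i) (c : n → R) :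
    Y * spectralSum u c = spectralSum u (lam * c) := by
  simp [spectralSum, Finset.mul_sum, mul_vecMulVec, heig, smul_vecMulVec, mul_smul,
    smul_comm (c _)]

variable [DecidableEq n] (horth : ∀ i j, u i ⬝ᵥ u j = if i = j then 1 else 0)
include horth

theorem spectralSum_mulVec (c : n → R) (k : n) : spectralSum u c *ᵥ u k = c k • u k := by
  simp [spectralSum, sum_mulVec, smul_mulVec, vecMulVec_mulVec, horth]

theorem spectralSum_mul_spectralSum (c d : n → R) :
    spectralSum u c * spectralSum u d = spectralSum u (c * d) := by
  simp [spectralSum, Finset.sum_mul_sum, vecMulVec_mul_vecMulVec, horth, smul_smul,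
    apply_ite (vecMulVec _), mul_comm]

theorem trace_spectralSum (c : n → R) : (spectralSum u c).trace = ∑ i, c i := by
  simp [spectralSum, trace_sum, horth]

theorem spectralSum_one : spectralSum u 1 = 1 := by
  have hrows : of u * (of u)ᵀ = 1 := by
    ext i j
    simpa [mul_apply, dotProduct, one_apply] using horth i j
  rw [← mul_eq_one_comm.mp hrows]
  ext i j
  simp [spectralSum, vecMulVec_apply, mul_apply, Matrix.sum_apply]

theorem mul_spectralSum_sub_trace_smul_one {Y : Matrix n n R} {lam : n → R}
    (heig : ∀ i, Y *ᵥ u i = lam i • u i) (s : n → R) :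
    Y * spectralSum u s - (Y * spectralSum u s).trace • 1
      = spectralSum u (fun i => lam i * s i - ∑ j, lam j * s j) := by
  rw [mul_spectralSum_of_mulVec_eq heig, trace_spectralSum horth, ← spectralSum_one horth]
  simp [spectralSum, sub_smul, Finset.smul_sum, Finset.sum_sub_distrib]

theorem exists_pos_eigenvalue_spectralSum [Preorder R] [Nontrivial R] {c : n → R} {k : n}
    (hk : 0 < c k) : ∃ μ : R, 0 < μ ∧ ∃ v ≠ 0, spectralSum u c *ᵥ v = μ • v := by
  refine ⟨c k, hk, u k, fun h => ?_, spectralSum_mulVec horth c k⟩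
  simpa [h] using horth k k

end CommRing

theorem isUnit_spectralSum [DecidableEq n] [Field R] {u : n → n → R}
    (horth : ∀ i j, u i ⬝ᵥ u j = if i = j then 1 else 0) {c : n → R} (hc : ∀ i, c i ≠ 0) :
    IsUnit (spectralSum u c) := by
  refine IsUnit.of_mul_eq_one (spectralSum u c⁻¹) ?_
  rw [spectralSum_mul_spectralSum horth,
    show c * c⁻¹ = 1 from funext fun i => mul_inv_cancel₀ (hc i), spectralSum_one horth]

end Matrix

theorem upsilon_invertible_and_positive_eigenvalue_general
    (Y : Matrix (Fin 3) (Fin 3) ℝ)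
    (lam : Fin 3 → ℝ) (u : Fin 3 → Fin 3 → ℝ)
    (heig : ∀ i, Y *ᵥ u i = lam i • u i)
    (horth : ∀ i j, u i ⬝ᵥ u j = if i = j then 1 else 0)
    (hpos : 0 ≤ lam 0) (hlt01 : lam 0 < lam 1) (hlt12 : lam 1 < lam 2)
    (R2 R3 R4 U2 U3 U4 : Matrix (Fin 3) (Fin 3) ℝ)
    (hR2 : R2 = vecMulVec (u 0) (u 0) - vecMulVec (u 1) (u 1) - vecMulVec (u 2) (u 2))
    (hR3 : R3 = -vecMulVec (u 0) (u 0) + vecMulVec (u 1) (u 1) - vecMulVec (u 2) (u 2))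
    (hR4 : R4 = -vecMulVec (u 0) (u 0) - vecMulVec (u 1) (u 1) + vecMulVec (u 2) (u 2))
    (hU2 : U2 = Y * R2 - (Y * R2).trace • (1 : Matrix (Fin 3) (Fin 3) ℝ))
    (hU3 : U3 = Y * R3 - (Y * R3).trace • (1 : Matrix (Fin 3) (Fin 3) ℝ))
    (hU4 : U4 = Y * R4 - (Y * R4).trace • (1 : Matrix (Fin 3) (Fin 3) ℝ)) :
    ∀ U ∈ ({U2, U3, U4} : Set (Matrix (Fin 3) (Fin 3) ℝ)),
      IsUnit U ∧ ∃ μ : ℝ, 0 < μ ∧ ∃ v : Fin 3 → ℝ, v ≠ 0 ∧ U *ᵥ v = μ • v := by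
  have upsilon (s : Fin 3 → ℝ) (k : Fin 3) (hne : ∀ i, lam i * s i - ∑ j, lam j * s j ≠ 0)
      (hk : 0 < lam k * s k - ∑ j, lam j * s j) :
      IsUnit (Y * spectralSum u s - (Y * spectralSum u s).trace • 1) ∧ ∃ μ : ℝ, 0 < μ ∧
        ∃ v ≠ 0, (Y * spectralSum u s - (Y * spectralSum u s).trace • 1) *ᵥ v = μ • v := by
    rw [mul_spectralSum_sub_trace_smul_one horth heig]
    exact ⟨isUnit_spectralSum horth hne, exists_pos_eigenvalue_spectralSum horth hk⟩
  have hR2' : R2 = spectralSum u ![1, -1, -1] := by rw [hR2, spectralSum_fin_three]; module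
  have hR3' : R3 = spectralSum u ![-1, 1, -1] := by rw [hR3, spectralSum_fin_three]; module
  have hR4' : R4 = spectralSum u ![-1, -1, 1] := by rw [hR4, spectralSum_fin_three]; module
  rintro U (rfl | rfl | rfl)
  · rw [hU2, hR2']
    refine upsilon _ 0 (fun i => ?_) ?_ <;> (try fin_cases i) <;>
      simp only [Fin.isValue, Fin.zero_eta, Fin.mk_one, Fin.reduceFinMk, cons_val_zero,
        cons_val_one, cons_val, Fin.sum_univ_three] <;>
      grind
  · rw [hU3, hR3']
    refine upsilon _ 0 (fun i => ?_) ?_ <;> (try fin_cases i) <;>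
      simp only [Fin.isValue, Fin.zero_eta, Fin.mk_one, Fin.reduceFinMk, cons_val_zero,
        cons_val_one, cons_val, Fin.sum_univ_three] <;>
      grind
  · rw [hU4, hR4']
    refine upsilon _ 2 (fun i => ?_) ?_ <;> (try fin_cases i) <;>
      simp only [Fin.isValue, Fin.zero_eta, Fin.mk_one, Fin.reduceFinMk, cons_val_zero,
        cons_val_one, cons_val, Fin.sum_univ_three] <;>
      grind

/-- **Invertibility and a positive eigenvalue of the linearization matrices `Υⱼ`.**
With `Y` symmetric positive semidefinite with eigenvalues `0 ≤ λ₁ < λ₂ < λ₃`,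
orthonormal eigenvectors `u₁, u₂, u₃`, and `Υⱼ = Y Rⱼ − tr(Y Rⱼ) I₃` for the three
non-identity equilibria `Rⱼ`, each `Υⱼ` is invertible and has at least one strictly
positive (real) eigenvalue. -/
theorem upsilon_invertible_and_positive_eigenvalue
    (Y : Matrix (Fin 3) (Fin 3) ℝ) (hYsymm : Yᵀ = Y)
    (lam : Fin 3 → ℝ) (u : Fin 3 → Fin 3 → ℝ)
    (heig : ∀ i, Y *ᵥ u i = lam i • u i)
    (horth : ∀ i j, u i ⬝ᵥ u j = if i = j then 1 else 0)
    (hpos : 0 ≤ lam 0) (hlt01 : lam 0 < lam 1) (hlt12 : lam 1 < lam 2)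
    (R2 R3 R4 U2 U3 U4 : Matrix (Fin 3) (Fin 3) ℝ)
    (hR2 : R2 = vecMulVec (u 0) (u 0) - vecMulVec (u 1) (u 1) - vecMulVec (u 2) (u 2))
    (hR3 : R3 = -vecMulVec (u 0) (u 0) + vecMulVec (u 1) (u 1) - vecMulVec (u 2) (u 2))
    (hR4 : R4 = -vecMulVec (u 0) (u 0) - vecMulVec (u 1) (u 1) + vecMulVec (u 2) (u 2))
    (hU2 : U2 = Y * R2 - (Y * R2).trace • (1 : Matrix (Fin 3) (Fin 3) ℝ))
    (hU3 : U3 = Y * R3 - (Y * R3).trace • (1 : Matrix (Fin 3) (Fin 3) ℝ))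
    (hU4 : U4 = Y * R4 - (Y * R4).trace • (1 : Matrix (Fin 3) (Fin 3) ℝ)) :
    ∀ U ∈ ({U2, U3, U4} : Set (Matrix (Fin 3) (Fin 3) ℝ)),
      IsUnit U ∧ ∃ μ : ℝ, 0 < μ ∧ ∃ v : Fin 3 → ℝ, v ≠ 0 ∧ U *ᵥ v = μ • v :=
  upsilon_invertible_and_positive_eigenvalue_general Y lam u heig horth hpos hlt01 hlt12 R2 R3 R4 U2
    U3 U4 hR2 hR3 hR4 hU2 hU3 hU4
end

section
/- Let Υ ∈ M₃(ℝ) be symmetric and invertible with at least one strictly positive eigenvalue, let k_p, k_I > 0, and let V : ℝ → SO(3) be continuous. Then the origin of the linear time-varying system ẋ = Υ x + V(t)ᵀ θ, θ̇ = 2 (k_I/k_p) V(t) Υ x is unstable: there exists ε > 0 such that for every δ > 0 there exist a differentiable solution (x, θ) : [0, ∞) → ℝ³ × ℝ³ with ‖(x(0), θ(0))‖ < δ and a time T > 0 with ‖(x(T), θ(T))‖ ≥ ε. -/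
/-!
Along a solution, `W = ⟨x, Υx⟩ - c⁻¹ |θ|²` (with `c = 2 k_I / k_p`) satisfies `Ẇ = 2 |Υx|²`:
the symmetry of `Υ` and the weight `c⁻¹` make the cross terms `⟨Vᵀθ, Υx⟩` cancel. Since `Υ` is
invertible, `W ≤ ⟨x, Υx⟩ = ⟨Υ⁻¹(Υx), Υx⟩ ≤ B |Υx|²`, so `Ẇ ≥ (2 / B) W` and `W` grows
exponentially once it is positive. Starting from a small multiple of an eigenvector of `Υ` for a
positive eigenvalue, with `θ = 0`, makes `W(0) > 0`; as `W ≤ C ‖x‖²`, the solution leaves the unit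
ball. Solutions exist for all times because the system is linear with continuous coefficients: on
`[-T, T]` some iterate of the Picard operator is a contraction, and the solutions on growing
intervals agree by uniqueness.
-/

open Matrix

noncomputable section

def SO3 : Set (Matrix (Fin 3) (Fin 3) ℝ) := {R | Rᵀ * R = 1 ∧ R.det = 1}

open Set Function Filter intervalIntegral MeasureTheory
open scoped NNReal

theorem abs_integral_abs_pow (t : ℝ) (m : ℕ) :
    |∫ s in (0 : ℝ)..t, |s| ^ m| = |t| ^ (m + 1) / (m + 1) := by
  have key : ∀ t : ℝ, 0 ≤ t → ∫ s in (0 : ℝ)..t, |s| ^ m = t ^ (m + 1) / (m + 1) := by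
    intro t ht
    have : ∫ s in (0 : ℝ)..t, |s| ^ m = ∫ s in (0 : ℝ)..t, s ^ m :=
      integral_congr fun s hs => by rw [uIcc_of_le ht] at hs; simp only [abs_of_nonneg hs.1]
    simp [this, integral_pow]
  rcases le_total 0 t with ht | ht
  · rw [key t ht, abs_of_nonneg ht, abs_of_nonneg (by positivity)]
  · have hsymm : ∫ s in (0 : ℝ)..t, |s| ^ m = -∫ s in (0 : ℝ)..-t, |s| ^ m := by
      simpa [integral_symm 0 (-t)] using integral_comp_neg (a := 0) (b := t) fun s => |s| ^ m
    have : 0 ≤ -t := by linarith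
    rw [hsymm, abs_neg, key (-t) this, abs_of_nonpos ht, abs_of_nonneg (by positivity)]

section GlobalExistence

variable {E : Type*} [NormedAddCommGroup E] [NormedSpace ℝ E]
  {f : ℝ → E → E} {T : ℝ} {K : ℝ≥0}

def picardIcc (hf : Continuous (uncurry f)) (hT : 0 ≤ T) (x₀ : E)
    (y : C(Icc (-T) T, E)) : C(Icc (-T) T, E) where
  toFun t := ODE.picard f 0 x₀ (IccExtend (neg_le_self hT) y) t
  continuous_toFun := continuous_const.add <|
    (continuous_primitive (fun _ _ => Continuous.intervalIntegrable
      (hf.comp (continuous_id.prodMk y.continuous.Icc_extend')) _ _) 0).comp continuous_subtype_val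

variable (hf : Continuous (uncurry f)) (hT : 0 ≤ T) (x₀ : E)

theorem picardIcc_apply (y : C(Icc (-T) T, E)) (t : Icc (-T) T) :
    picardIcc hf hT x₀ y t = x₀ + ∫ s in (0 : ℝ)..t, f s (IccExtend (neg_le_self hT) y s) := rfl

theorem norm_iterate_picardIcc_sub_le (hlip : ∀ t ∈ Icc (-T) T, LipschitzWith K (f t))
    (m : ℕ) (y z : C(Icc (-T) T, E)) (t : Icc (-T) T) :
    ‖(picardIcc hf hT x₀)^[m] y t - (picardIcc hf hT x₀)^[m] z t‖ ≤
      dist y z * (K * |(t : ℝ)|) ^ m / m.factorial := by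
  induction m generalizing t with
  | zero => simpa [dist_eq_norm] using ContinuousMap.dist_apply_le_dist (f := y) (g := z) t
  | succ m ih =>
    rw [iterate_succ_apply', iterate_succ_apply']
    set u := (picardIcc hf hT x₀)^[m] y
    set v := (picardIcc hf hT x₀)^[m] z
    set ue := IccExtend (neg_le_self hT) u
    set ve := IccExtend (neg_le_self hT) v
    set C := dist y z * K ^ (m + 1) / m.factorial
    have hbound : ∀ s ∈ uIoc (0 : ℝ) t, ‖f s (ue s) - f s (ve s)‖ ≤ C * |s| ^ m := by
      intro s hs
      have hsT : s ∈ Icc (-T) T :=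
        uIcc_subset_Icc ⟨neg_nonpos.2 hT, hT⟩ t.2 (uIoc_subset_uIcc hs)
      calc ‖f s (ue s) - f s (ve s)‖ ≤ K * ‖ue s - ve s‖ := by
            simpa [dist_eq_norm] using (hlip s hsT).dist_le_mul (ue s) (ve s)
        _ ≤ K * (dist y z * (K * |s|) ^ m / m.factorial) := by
            gcongr
            simpa [ue, ve, IccExtend_of_mem _ _ hsT] using ih ⟨s, hsT⟩
        _ = C * |s| ^ m := by ring
    have hcont (w : C(Icc (-T) T, E)) :
        Continuous fun s => f s (IccExtend (neg_le_self hT) w s) :=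
      hf.comp (continuous_id.prodMk w.continuous.Icc_extend')
    calc ‖picardIcc hf hT x₀ u t - picardIcc hf hT x₀ v t‖
        = ‖∫ s in (0 : ℝ)..t, (f s (ue s) - f s (ve s))‖ := by
          rw [picardIcc_apply, picardIcc_apply, integral_sub ((hcont u).intervalIntegrable _ _)
            ((hcont v).intervalIntegrable _ _), add_sub_add_left_eq_sub]
      _ ≤ |∫ s in (0 : ℝ)..t, C * |s| ^ m| :=
          norm_integral_le_abs_of_norm_le (ae_restrict_of_forall_mem measurableSet_uIoc hbound)
            ((by fun_prop : Continuous fun s : ℝ => C * |s| ^ m).intervalIntegrable _ _)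
      _ = dist y z * (K * |(t : ℝ)|) ^ (m + 1) / (m + 1).factorial := by
          rw [intervalIntegral.integral_const_mul, abs_mul, abs_integral_abs_pow,
            abs_of_nonneg (by positivity), Nat.factorial_succ]
          simp only [C]
          push_cast
          field_simp
          ring

theorem lipschitzWith_iterate_picardIcc (hlip : ∀ t ∈ Icc (-T) T, LipschitzWith K (f t))
    (m : ℕ) :
    LipschitzWith ((K * T) ^ m / m.factorial).toNNReal (picardIcc hf hT x₀)^[m] := by
  refine LipschitzWith.of_dist_le' fun y z => (ContinuousMap.dist_le (by positivity)).2 fun t => ?_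
  rw [dist_eq_norm]
  refine (norm_iterate_picardIcc_sub_le hf hT x₀ hlip m y z t).trans ?_
  rw [mul_comm _ (dist y z), mul_div_assoc]
  gcongr
  exact abs_le.2 ⟨by linarith [t.2.1], t.2.2⟩

theorem exists_isFixedPt_picardIcc [CompleteSpace E]
    (hlip : ∀ t ∈ Icc (-T) T, LipschitzWith K (f t)) :
    ∃ y, IsFixedPt (picardIcc hf hT x₀) y := by
  obtain ⟨m, hm⟩ := ((FloorSemiring.tendsto_pow_div_factorial_atTop ((K : ℝ) * T)).eventually
    (gt_mem_nhds one_pos)).exists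
  have hcontr : ContractingWith _ (picardIcc hf hT x₀)^[m] :=
    ⟨by rwa [← NNReal.coe_lt_coe, Real.coe_toNNReal _ (by positivity)],
      lipschitzWith_iterate_picardIcc hf hT x₀ hlip m⟩
  exact ⟨_, hcontr.isFixedPt_fixedPoint_iterate⟩

theorem exists_forall_mem_Ioo_hasDerivAt [CompleteSpace E] (hf : Continuous (uncurry f))
    (hT : 0 ≤ T) (x₀ : E) (hlip : ∀ t ∈ Icc (-T) T, LipschitzWith K (f t)) :
    ∃ α : ℝ → E, Continuous α ∧ α 0 = x₀ ∧ ∀ t ∈ Ioo (-T) T, HasDerivAt α (f t (α t)) t := by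
  obtain ⟨y, hy⟩ := exists_isFixedPt_picardIcc hf hT x₀ hlip
  set α := IccExtend (neg_le_self hT) y
  have hα : Continuous α := y.continuous.Icc_extend'
  have hpicard : ∀ t ∈ Icc (-T) T, α t = ODE.picard f 0 x₀ α t := fun t ht => by
    simp only [α, IccExtend_of_mem _ _ ht]
    conv_lhs => rw [← hy]
    rfl
  refine ⟨α, hα, by simpa using hpicard 0 ⟨neg_nonpos.2 hT, hT⟩, fun t ht => ?_⟩
  have hderiv := ((hf.comp (continuous_id.prodMk hα)).integral_hasStrictDerivAt 0 t).hasDerivAt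
  refine (hderiv.const_add x₀).congr_of_eventuallyEq ?_
  filter_upwards [Icc_mem_nhds ht.1 ht.2] using hpicard

theorem exists_hasDerivAt_of_continuous_of_lipschitzWith [CompleteSpace E]
    (hf : Continuous (uncurry f)) (x₀ : E)
    (hlip : ∀ T, ∃ K, ∀ t ∈ Icc (-T) T, LipschitzWith K (f t)) :
    ∃ y : ℝ → E, y 0 = x₀ ∧ ∀ t, HasDerivAt y (f t (y t)) t := by
  choose K hK using hlip
  choose α hαc hα0 hα using fun n : ℕ =>
    exists_forall_mem_Ioo_hasDerivAt hf (T := n + 1) (by positivity) x₀ (hK _)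
  have hagree : ∀ (n m : ℕ) (s : ℝ), |s| ≤ n + 1 → |s| ≤ m + 1 → α n s = α m s := by
    intro n m s hn hm
    set k := min n m
    have hkn : (k : ℝ) ≤ n := Nat.cast_le.2 (min_le_left n m)
    have hkm : (k : ℝ) ≤ m := Nat.cast_le.2 (min_le_right n m)
    have hsub : ∀ j : ℕ, (k : ℝ) ≤ j → Ioo (-(k + 1 : ℝ)) (k + 1) ⊆ Ioo (-(j + 1 : ℝ)) (j + 1) :=
      fun j hj => Ioo_subset_Ioo (by linarith) (by linarith)
    refine ODE_solution_unique_of_mem_Icc (s := fun _ => univ) (t₀ := 0)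
      (fun t ht => (hK _ t (Ioo_subset_Icc_self ht)).lipschitzOnWith) ⟨by linarith, by linarith⟩
      (hαc n).continuousOn (fun t ht => hα n t (hsub n hkn ht)) (fun _ _ => trivial)
      (hαc m).continuousOn (fun t ht => hα m t (hsub m hkm ht)) (fun _ _ => trivial)
      (by rw [hα0, hα0]) (abs_le.1 ?_)
    rw [Nat.cast_min, ← min_add_add_right]
    exact le_min hn hm
  refine ⟨fun t => α ⌈|t|⌉₊ t, hα0 _, fun t => ?_⟩
  have ht : t ∈ Ioo (-(⌈|t|⌉₊ + 1 : ℝ)) (⌈|t|⌉₊ + 1) :=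
    abs_lt.1 ((Nat.le_ceil _).trans_lt (lt_add_one _))
  refine (hα _ t ht).congr_of_eventuallyEq ?_
  filter_upwards [Ioo_mem_nhds ht.1 ht.2] with s hs
  exact hagree _ _ s ((Nat.le_ceil _).trans (by linarith)) (abs_le.2 ⟨hs.1.le, hs.2.le⟩)

end GlobalExistence

attribute [local instance] Matrix.linftyOpNormedAddCommGroup in
theorem exists_hasDerivAt_mulVec {ι : Type*} [Fintype ι] {A : ℝ → Matrix ι ι ℝ}
    (hA : Continuous A) (y₀ : ι → ℝ) :
    ∃ y : ℝ → ι → ℝ, y 0 = y₀ ∧ ∀ t, HasDerivAt y (A t *ᵥ y t) t := by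
  refine exists_hasDerivAt_of_continuous_of_lipschitzWith
    ((hA.comp continuous_fst).matrix_mulVec continuous_snd) y₀ fun T => ?_
  obtain ⟨C, hC⟩ := isCompact_Icc.exists_bound_of_continuousOn (hA.continuousOn (s := Icc (-T) T))
  refine ⟨C.toNNReal, fun t ht => LipschitzWith.of_dist_le' fun u w => ?_⟩
  rw [dist_eq_norm, dist_eq_norm, ← mulVec_sub]
  exact (linfty_opNorm_mulVec _ _).trans (mul_le_mul_of_nonneg_right (hC t ht) (norm_nonneg _))

theorem abs_dotProduct_le {n : Type*} [Fintype n] (u w : n → ℝ) :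
    |u ⬝ᵥ w| ≤ Fintype.card n * (‖u‖ * ‖w‖) :=
  calc |u ⬝ᵥ w| ≤ ∑ i, |u i * w i| := Finset.abs_sum_le_sum_abs _ _
    _ ≤ ∑ _i : n, ‖u‖ * ‖w‖ := Finset.sum_le_sum fun i _ => by
        rw [abs_mul, ← Real.norm_eq_abs, ← Real.norm_eq_abs]
        exact mul_le_mul (norm_le_pi_norm u i) (norm_le_pi_norm w i) (norm_nonneg _)
          (norm_nonneg _)
    _ = Fintype.card n * (‖u‖ * ‖w‖) := by simp

theorem sq_norm_le_dotProduct_self {n : Type*} [Fintype n] (z : n → ℝ) : ‖z‖ ^ 2 ≤ z ⬝ᵥ z := by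
  have hsq : ∀ i, z i ^ 2 ≤ z ⬝ᵥ z := fun i => by
    rw [sq]
    exact Finset.single_le_sum (f := fun j => z j * z j) (fun j _ => mul_self_nonneg (z j))
      (Finset.mem_univ i)
  have hz : 0 ≤ z ⬝ᵥ z := Finset.sum_nonneg fun i _ => mul_self_nonneg (z i)
  refine (Real.le_sqrt (norm_nonneg z) hz).1 ?_
  exact (pi_norm_le_iff_of_nonneg (Real.sqrt_nonneg _)).2 fun i => Real.abs_le_sqrt (hsq i)

attribute [local instance] Matrix.linftyOpNormedAddCommGroup in
theorem exists_dotProduct_mulVec_le {n : Type*} [Fintype n] (M : Matrix n n ℝ) :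
    ∃ B > 0, ∀ z, z ⬝ᵥ (M *ᵥ z) ≤ B * ‖z‖ ^ 2 := by
  refine ⟨Fintype.card n * ‖M‖ + 1, by positivity, fun z => ?_⟩
  calc z ⬝ᵥ (M *ᵥ z) ≤ Fintype.card n * (‖z‖ * ‖M *ᵥ z‖) :=
        (le_abs_self _).trans (abs_dotProduct_le _ _)
    _ ≤ Fintype.card n * (‖z‖ * (‖M‖ * ‖z‖)) := by gcongr; exact linfty_opNorm_mulVec _ _
    _ ≤ (Fintype.card n * ‖M‖ + 1) * ‖z‖ ^ 2 := by nlinarith [sq_nonneg ‖z‖]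

theorem HasDerivAt.dotProduct_s10 {n : Type*} [Fintype n] {x y : ℝ → n → ℝ} {x' y' : n → ℝ} {t : ℝ}
    (hx : HasDerivAt x x' t) (hy : HasDerivAt y y' t) :
    HasDerivAt (fun s => x s ⬝ᵥ y s) (x' ⬝ᵥ y t + x t ⬝ᵥ y') t := by
  refine (HasDerivAt.fun_sum (u := Finset.univ)
    fun i _ => (hasDerivAt_pi.1 hx i).mul (hasDerivAt_pi.1 hy i)).congr_deriv ?_
  rw [Finset.sum_add_distrib]
  rfl

theorem mul_exp_le_of_hasDerivAt {W W' : ℝ → ℝ} {κ : ℝ} (hW : ∀ t, HasDerivAt W (W' t) t)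
    (hW' : ∀ t, κ * W t ≤ W' t) {T : ℝ} (hT : 0 ≤ T) : W 0 * Real.exp (κ * T) ≤ W T := by
  have hmono : Monotone fun t => Real.exp (-κ * t) * W t := by
    refine monotone_of_hasDerivAt_nonneg
      (fun t => (((hasDerivAt_id t).const_mul (-κ)).exp).mul (hW t)) fun t => ?_
    have := hW' t
    have := Real.exp_pos (-κ * t)
    simp only [Pi.zero_apply, id_eq, mul_one]
    nlinarith
  have h := hmono hT
  simp only [mul_zero, Real.exp_zero, one_mul] at h
  calc W 0 * Real.exp (κ * T) ≤ Real.exp (-κ * T) * W T * Real.exp (κ * T) := by gcongr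
    _ = W T := by
        rw [mul_right_comm, ← Real.exp_add, neg_mul, neg_add_cancel, Real.exp_zero, one_mul]

section ErrorSystem

variable {n : Type*} [Fintype n]

theorem exists_hasDerivAt_errorSystem (Υ : Matrix n n ℝ) {V : ℝ → Matrix n n ℝ} (hV : Continuous V)
    (c : ℝ) (x₀ θ₀ : n → ℝ) :
    ∃ x θ : ℝ → n → ℝ, x 0 = x₀ ∧ θ 0 = θ₀ ∧
      (∀ t, HasDerivAt x (Υ *ᵥ x t + (V t)ᵀ *ᵥ θ t) t) ∧
      ∀ t, HasDerivAt θ (c • (V t *ᵥ (Υ *ᵥ x t))) t := by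
  obtain ⟨y, hy0, hy⟩ := exists_hasDerivAt_mulVec
    (A := fun t => fromBlocks Υ (V t)ᵀ (c • (V t * Υ)) 0) (by fun_prop) (Sum.elim x₀ θ₀)
  refine ⟨fun t => y t ∘ .inl, fun t => y t ∘ .inr, by simp [hy0], by simp [hy0],
    fun t => hasDerivAt_pi.2 fun i => ?_, fun t => hasDerivAt_pi.2 fun i => ?_⟩
  · simpa [fromBlocks_mulVec] using hasDerivAt_pi.1 (hy t) (.inl i)
  · simpa [fromBlocks_mulVec, smul_mulVec, mulVec_mulVec] using hasDerivAt_pi.1 (hy t) (.inr i)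

def lyapunov (Υ : Matrix n n ℝ) (c : ℝ) (x θ : n → ℝ) : ℝ := x ⬝ᵥ (Υ *ᵥ x) - c⁻¹ * (θ ⬝ᵥ θ)

theorem hasDerivAt_lyapunov {Υ : Matrix n n ℝ} (hΥ : Υᵀ = Υ) {c : ℝ} (hc : c ≠ 0)
    {V : Matrix n n ℝ} {x θ : ℝ → n → ℝ} {t : ℝ}
    (hx : HasDerivAt x (Υ *ᵥ x t + Vᵀ *ᵥ θ t) t) (hθ : HasDerivAt θ (c • (V *ᵥ (Υ *ᵥ x t))) t) :
    HasDerivAt (fun s => lyapunov Υ c (x s) (θ s)) (2 * ((Υ *ᵥ x t) ⬝ᵥ (Υ *ᵥ x t))) t := by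
  have hΥx : HasDerivAt (fun s => Υ *ᵥ x s) (Υ *ᵥ (Υ *ᵥ x t + Vᵀ *ᵥ θ t)) t :=
    (mulVecLin Υ).toContinuousLinearMap.hasFDerivAt.comp_hasDerivAt t hx
  have hsymm (u w : n → ℝ) : u ⬝ᵥ (Υ *ᵥ w) = (Υ *ᵥ u) ⬝ᵥ w := by
    rw [dotProduct_mulVec, ← mulVec_transpose, hΥ]
  have hadj (u w : n → ℝ) : (Vᵀ *ᵥ u) ⬝ᵥ w = u ⬝ᵥ (V *ᵥ w) := by
    rw [mulVec_transpose, dotProduct_mulVec]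
  refine ((hx.dotProduct_s10 hΥx).sub ((hθ.dotProduct_s10 hθ).const_mul c⁻¹)).congr_deriv ?_
  rw [hsymm (x t), add_dotProduct, dotProduct_add, dotProduct_comm (Υ *ᵥ x t) (Vᵀ *ᵥ θ t), hadj,
    smul_dotProduct, dotProduct_smul, smul_eq_mul, smul_eq_mul, dotProduct_comm (θ t)]
  field_simp
  ring

theorem exists_one_le_norm_of_lyapunov_pos [DecidableEq n] {Υ : Matrix n n ℝ} (hΥ : Υᵀ = Υ)
    (hΥu : IsUnit Υ) {c : ℝ} (hc : 0 < c) {V : ℝ → Matrix n n ℝ} {x θ : ℝ → n → ℝ}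
    (hx : ∀ t, HasDerivAt x (Υ *ᵥ x t + (V t)ᵀ *ᵥ θ t) t)
    (hθ : ∀ t, HasDerivAt θ (c • (V t *ᵥ (Υ *ᵥ x t))) t)
    (h0 : 0 < lyapunov Υ c (x 0) (θ 0)) :
    ∃ T > 0, 1 ≤ ‖(x T, θ T)‖ := by
  set W := fun s => lyapunov Υ c (x s) (θ s)
  have hW_le (s : ℝ) : W s ≤ x s ⬝ᵥ (Υ *ᵥ x s) :=
    sub_le_self _ <| mul_nonneg (inv_nonneg.2 hc.le) <|
      (sq_nonneg _).trans (sq_norm_le_dotProduct_self _)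
  obtain ⟨B, hB, hΥinv⟩ := exists_dotProduct_mulVec_le Υ⁻¹
  obtain ⟨C, hC, hΥC⟩ := exists_dotProduct_mulVec_le Υ
  have hgrowth (s : ℝ) : 2 / B * W s ≤ 2 * ((Υ *ᵥ x s) ⬝ᵥ (Υ *ᵥ x s)) := by
    have hxΥx : x s ⬝ᵥ (Υ *ᵥ x s) ≤ B * ((Υ *ᵥ x s) ⬝ᵥ (Υ *ᵥ x s)) :=
      calc x s ⬝ᵥ (Υ *ᵥ x s) = (Υ *ᵥ x s) ⬝ᵥ (Υ⁻¹ *ᵥ (Υ *ᵥ x s)) := by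
            rw [mulVec_mulVec, nonsing_inv_mul _ ((isUnit_iff_isUnit_det Υ).1 hΥu), one_mulVec,
              dotProduct_comm]
        _ ≤ B * ‖Υ *ᵥ x s‖ ^ 2 := hΥinv _
        _ ≤ B * ((Υ *ᵥ x s) ⬝ᵥ (Υ *ᵥ x s)) := by gcongr; exact sq_norm_le_dotProduct_self _
    rw [div_mul_eq_mul_div, div_le_iff₀ hB]
    nlinarith [hW_le s]
  obtain ⟨T, hCT, hT⟩ := (((Real.tendsto_exp_atTop.comp (tendsto_id.const_mul_atTop
    (by positivity : 0 < 2 / B))).const_mul_atTop h0).eventually_ge_atTop C).and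
    (eventually_gt_atTop 0) |>.exists
  refine ⟨T, hT, ?_⟩
  have hCnorm : C ≤ C * ‖(x T, θ T)‖ ^ 2 :=
    calc C ≤ W 0 * Real.exp (2 / B * T) := hCT
      _ ≤ W T := mul_exp_le_of_hasDerivAt
          (fun s => hasDerivAt_lyapunov hΥ hc.ne' (hx s) (hθ s)) hgrowth hT.le
      _ ≤ C * ‖x T‖ ^ 2 := (hW_le T).trans (hΥC _)
      _ ≤ C * ‖(x T, θ T)‖ ^ 2 := by gcongr; exact norm_fst_le (x T, θ T)
  have hsq : 1 ≤ ‖(x T, θ T)‖ ^ 2 := (le_mul_iff_one_le_right hC).1 hCnorm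
  nlinarith [norm_nonneg (x T, θ T)]

end ErrorSystem

theorem linearization_unstable_general
    (Υ : Matrix (Fin 3) (Fin 3) ℝ) (hΥsymm : Υᵀ = Υ)
    (hΥunit : IsUnit Υ)
    (hΥpos : ∃ μ : ℝ, 0 < μ ∧ ∃ v : Fin 3 → ℝ, v ≠ 0 ∧ Υ *ᵥ v = μ • v)
    (kp kI : ℝ) (hkp : 0 < kp) (hkI : 0 < kI)
    (V : ℝ → Matrix (Fin 3) (Fin 3) ℝ)
    (hVcont : Continuous V) :
    ∃ ε > (0 : ℝ), ∀ δ > (0 : ℝ),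
      ∃ x θ : ℝ → Fin 3 → ℝ,
        (∀ t, 0 ≤ t → HasDerivAt x (Υ *ᵥ x t + (V t)ᵀ *ᵥ θ t) t) ∧
        (∀ t, 0 ≤ t → HasDerivAt θ ((2 * (kI / kp)) • (V t *ᵥ (Υ *ᵥ x t))) t) ∧
        ‖(x 0, θ 0)‖ < δ ∧
        ∃ T > (0 : ℝ), ε ≤ ‖(x T, θ T)‖ := by
  obtain ⟨μ, hμ, v, hv, hΥv⟩ := hΥpos
  have hc : 0 < 2 * (kI / kp) := by positivity
  refine ⟨1, one_pos, fun δ hδ => ?_⟩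
  obtain ⟨a, ha, hav⟩ := exists_pos_mul_lt hδ ‖v‖
  obtain ⟨x, θ, hx0, hθ0, hx, hθ⟩ :=
    exists_hasDerivAt_errorSystem Υ hVcont (2 * (kI / kp)) (a • v) 0
  have hW0 : 0 < lyapunov Υ (2 * (kI / kp)) (x 0) (θ 0) := by
    have hvv : 0 < v ⬝ᵥ v := (pow_pos (norm_pos_iff.2 hv) 2).trans_le (sq_norm_le_dotProduct_self v)
    simp only [lyapunov, hx0, hθ0, mulVec_smul, hΥv, dotProduct_zero, mul_zero, sub_zero,
      smul_dotProduct, dotProduct_smul, smul_eq_mul]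
    positivity
  refine ⟨x, θ, fun t _ => hx t, fun t _ => hθ t, ?_,
    exists_one_le_norm_of_lyapunov_pos hΥsymm hΥunit hc hx hθ hW0⟩
  rw [hx0, hθ0, Prod.norm_mk, norm_zero, max_eq_left (norm_nonneg _), norm_smul,
    Real.norm_of_nonneg ha.le, mul_comm]
  exact hav

/-- **Instability of the linearization around the non-identity equilibria.**
If `Υ` is symmetric, invertible, with at least one strictly positive eigenvalue, and
`V(t) ∈ SO(3)` is continuous, then the origin of
`ẋ = Υx + V(t)ᵀθ`, `θ̇ = 2(k_I/k_p) V(t) Υ x` is unstable: there is `ε > 0` such that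
for every `δ > 0` some solution starting in the `δ`-ball around the origin leaves the
`ε`-ball in finite positive time. -/
theorem linearization_unstable
    (Υ : Matrix (Fin 3) (Fin 3) ℝ) (hΥsymm : Υᵀ = Υ)
    (hΥunit : IsUnit Υ)
    (hΥpos : ∃ μ : ℝ, 0 < μ ∧ ∃ v : Fin 3 → ℝ, v ≠ 0 ∧ Υ *ᵥ v = μ • v)
    (kp kI : ℝ) (hkp : 0 < kp) (hkI : 0 < kI)
    (V : ℝ → Matrix (Fin 3) (Fin 3) ℝ)
    (hV : ∀ t, V t ∈ SO3) (hVcont : Continuous V) :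
    ∃ ε > (0 : ℝ), ∀ δ > (0 : ℝ),
      ∃ x θ : ℝ → Fin 3 → ℝ,
        (∀ t, 0 ≤ t → HasDerivAt x (Υ *ᵥ x t + (V t)ᵀ *ᵥ θ t) t) ∧
        (∀ t, 0 ≤ t → HasDerivAt θ ((2 * (kI / kp)) • (V t *ᵥ (Υ *ᵥ x t))) t) ∧
        ‖(x 0, θ 0)‖ < δ ∧
        ∃ T > (0 : ℝ), ε ≤ ‖(x T, θ T)‖ :=
  linearization_unstable_general Υ hΥsymm hΥunit hΥpos kp kI hkp hkI V hVcont
end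
end

section
/- Let y_1, …, y_ν ∈ ℝ³ be such that at least two of them are linearly independent. Then the symmetric matrix −Σ_{i=1}^{ν} y_{i×} y_{i×} = Σ_{i=1}^{ν} ( ‖y_i‖² I₃ − y_i y_iᵀ ) is positive definite. -/
/-!
Since `skew3 v` is skew-symmetric, `-(skew3 v * skew3 v) = (skew3 v)ᴴ * skew3 v`, so the quadratic
form of the sum at `x` is `∑ i, ‖yᵢ × x‖²`. For `x ≠ 0` it can only vanish if every `yᵢ` is parallel
to `x`, which would make the two independent vectors parallel to each other.
-/

open Matrix

noncomputable section

theorem posDef_sum_conjTranspose_mul_self {m n ι R : Type*} [Fintype m] [Fintype n]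
    [Ring R] [PartialOrder R] [StarRing R] [StarOrderedRing R] [NoZeroDivisors R]
    (s : Finset ι) (A : ι → Matrix m n R) (h : ∀ x : n → R, x ≠ 0 → ∃ i ∈ s, A i *ᵥ x ≠ 0) :
    (∑ i ∈ s, (A i)ᴴ * A i).PosDef := by
  refine .of_dotProduct_mulVec_pos
    (posSemidef_sum s fun i _ => posSemidef_conjTranspose_mul_self (A i)).isHermitian
    fun x hx => ?_
  have quadratic_form :
      star x ⬝ᵥ (∑ i ∈ s, (A i)ᴴ * A i) *ᵥ x = ∑ i ∈ s, star (A i *ᵥ x) ⬝ᵥ A i *ᵥ x := by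
    simp only [sum_mulVec, dotProduct_sum, ← mulVec_mulVec, dotProduct_mulVec _ _ (A _ *ᵥ x),
      vecMul_conjTranspose, star_star]
  obtain ⟨i, hi, hAx⟩ := h x hx
  rw [quadratic_form]
  exact Finset.sum_pos' (fun j _ => dotProduct_star_self_nonneg _)
    ⟨i, hi, dotProduct_star_self_pos_iff.mpr hAx⟩

theorem cross_eq_zero_of_cross_eq_zero {F : Type*} [Field F]
    {a b x : Fin 3 → F} (hx : x ≠ 0) (ha : a ⨯₃ x = 0) (hb : b ⨯₃ x = 0) : a ⨯₃ b = 0 := by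
  have hxa : ¬LinearIndependent F ![x, a] := by
    rw [← crossProduct_ne_zero_iff_linearIndependent, not_not, ← cross_anticomm, ha, neg_zero]
  obtain ⟨c, rfl⟩ : ∃ c : F, c • x = a := by
    simpa only [LinearIndependent.pair_iff' hx, not_forall, not_not] using hxa
  rw [map_smul, LinearMap.smul_apply, ← cross_anticomm, hb, neg_zero, smul_zero]

theorem skew3_mulVec (v u : Fin 3 → ℝ) : skew3 v *ᵥ u = v ⨯₃ u := by
  ext i
  fin_cases i <;> simp [skew3, cross_apply, mulVec, dotProduct, Fin.sum_univ_three] <;> ring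

theorem skew3_conjTranspose (v : Fin 3 → ℝ) : (skew3 v)ᴴ = -skew3 v := by
  ext i j
  fin_cases i <;> fin_cases j <;> simp [skew3]

theorem neg_skew3_mul_self (v : Fin 3 → ℝ) :
    -(skew3 v * skew3 v) = (v ⬝ᵥ v) • (1 : Matrix (Fin 3) (Fin 3) ℝ) - vecMulVec v v := by
  refine ext_iff_mulVec.mpr fun u => ?_
  rw [neg_mulVec, ← mulVec_mulVec, skew3_mulVec, skew3_mulVec, cross_cross_eq_smul_sub_smul',
    sub_mulVec, smul_mulVec, one_mulVec, vecMulVec_mulVec, op_smul_eq_smul, neg_sub]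

/-- **Positive definiteness of `−Σ yᵢ× yᵢ×`.**
If at least two of the `yᵢ ∈ ℝ³` are linearly independent, then
`−Σᵢ yᵢ× yᵢ× = Σᵢ (‖yᵢ‖² I₃ − yᵢ yᵢᵀ)` is positive definite. -/
theorem neg_sum_skew_sq_posDef
    (ν : ℕ) (y : Fin ν → Fin 3 → ℝ)
    (hindep : ∃ i j : Fin ν, LinearIndependent ℝ ![y i, y j]) :
    (-∑ i, skew3 (y i) * skew3 (y i) =
      ∑ i, ((y i ⬝ᵥ y i) • (1 : Matrix (Fin 3) (Fin 3) ℝ) - vecMulVec (y i) (y i))) ∧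
    (-∑ i, skew3 (y i) * skew3 (y i)).PosDef := by
  rw [← Finset.sum_neg_distrib]
  refine ⟨Finset.sum_congr rfl fun i _ => neg_skew3_mul_self (y i), ?_⟩
  simp only [← neg_mul, ← skew3_conjTranspose]
  refine posDef_sum_conjTranspose_mul_self _ _ fun x hx => ?_
  obtain ⟨i, j, hij⟩ := hindep
  by_contra! hcross
  simp only [Finset.mem_univ, skew3_mulVec, true_implies] at hcross
  exact crossProduct_ne_zero_iff_linearIndependent.mpr hij
    (cross_eq_zero_of_cross_eq_zero hx (hcross i) (hcross j))
end
end
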